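/- arXiv:2003.09933 — 7 statements merged into one kernel-verified Lean document; each statement's English description precedes it below -/
import Mathlib

section
/- Let G be a group and K a subgroup such that the conjugacy class x^G is finite with |x^G| ≤ n for every x ∈ K. If moreover |K| ≤ j, then the normal closure ⟨K^G⟩ is finite, of order bounded by a function of n and j. -/
/-!
Let `S` be the set of `G`-conjugates of elements of `K`. It is finite (at most `|K| n` elements),
closed under conjugation, consists of elements whose `|K|`-th power is trivial, and generates
`⟨K^G⟩`. In a word in `S`, all occurrences of a letter `s` can be collected at the front: each
letter that `s` moves past is replaced by a conjugate, which is still in `S`. As `s ^ |K| = 1`,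
a word of length more than `(|K| - 1) |S|` contains some letter at least `|K|` times and can be
shortened this way. Hence `⟨K^G⟩ ⊆ (S ∪ {1}) ^ ((|K| - 1) |S|)`, which is finite of bounded size.
-/

open Pointwise Finset

theorem List.exists_lt_count_of_mul_card_lt_length {α : Type*} [DecidableEq α] {S : Finset α}
    {k : ℕ} {l : List α} (hl : ∀ x ∈ l, x ∈ S) (hlen : k * #S < l.length) :
    ∃ s ∈ S, k < l.count s := by
  have hsum : ∑ s ∈ S, l.count s = l.length := by
    simpa using Multiset.sum_count_eq_card (m := (l : Multiset α)) hl
  exact Finset.exists_lt_of_sum_lt (by rwa [sum_const, smul_eq_mul, mul_comm, hsum])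

variable {G : Type*} [Group G]

theorem List.exists_prod_eq_pow_count_mul [DecidableEq G] {S : Set G}
    (hS : ∀ g, ∀ x ∈ S, g * x * g⁻¹ ∈ S) (s : G) {l : List G} (hl : ∀ x ∈ l, x ∈ S) :
    ∃ l' : List G, (∀ x ∈ l', x ∈ S) ∧ l'.length + l.count s = l.length ∧
      l.prod = s ^ l.count s * l'.prod := by
  induction l with
  | nil => exact ⟨[], by simp, by simp, by simp⟩
  | cons x t ih =>
    obtain ⟨t', ht'S, ht'len, ht'prod⟩ := ih fun y hy => hl y (List.mem_cons_of_mem _ hy)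
    by_cases hx : x = s
    · subst hx
      refine ⟨t', ht'S, by simp [← ht'len, Nat.add_assoc], ?_⟩
      rw [List.prod_cons, ht'prod, List.count_cons_self, pow_succ', mul_assoc]
    · -- `x * s ^ c = s ^ c * ((s ^ c)⁻¹ * x * s ^ c)` with `c = t.count s`
      refine ⟨((s ^ t.count s)⁻¹ * x * s ^ t.count s) :: t', ?_, ?_, ?_⟩
      · simp only [List.forall_mem_cons]
        exact ⟨by simpa using hS (s ^ t.count s)⁻¹ x (hl x List.mem_cons_self), ht'S⟩
      · rw [List.count_cons_of_ne hx, List.length_cons, List.length_cons, ← ht'len]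
        omega
      · rw [List.count_cons_of_ne hx, List.prod_cons, List.prod_cons, ht'prod]
        group

theorem List.exists_length_le_prod_eq [DecidableEq G] {S : Finset G}
    (hS : ∀ g, ∀ x ∈ S, g * x * g⁻¹ ∈ S) {d : ℕ} (hd : 0 < d) (hpow : ∀ x ∈ S, x ^ d = 1)
    (l : List G) (hl : ∀ x ∈ l, x ∈ S) :
    ∃ l' : List G, (∀ x ∈ l', x ∈ S) ∧ l'.length ≤ (d - 1) * #S ∧ l'.prod = l.prod := by
  induction hn : l.length using Nat.strong_induction_on generalizing l with
  | _ n ih =>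
  by_cases hshort : l.length ≤ (d - 1) * #S
  · exact ⟨l, hl, hshort, rfl⟩
  obtain ⟨s, hsS, hds⟩ := List.exists_lt_count_of_mul_card_lt_length hl (not_le.mp hshort)
  obtain ⟨t, htS, htlen, hprod⟩ := List.exists_prod_eq_pow_count_mul (S := (S : Set G)) hS s hl
  have hpow_mod : s ^ l.count s = s ^ (l.count s % d) := pow_eq_pow_mod _ (hpow s hsS)
  have hmod : l.count s % d < d := Nat.mod_lt _ hd
  set l₂ := List.replicate (l.count s % d) s ++ t
  have hl₂S : ∀ x ∈ l₂, x ∈ S := by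
    simp only [l₂, List.mem_append, List.mem_replicate]
    rintro x (⟨-, rfl⟩ | hx)
    exacts [hsS, htS x hx]
  obtain ⟨l', hl'S, hl'len, hl'prod⟩ :=
    ih l₂.length (by simp only [l₂, List.length_append, List.length_replicate]; omega) l₂ hl₂S rfl
  refine ⟨l', hl'S, hl'len, ?_⟩
  rw [hl'prod, hprod, hpow_mod, List.prod_append, List.prod_replicate]

theorem List.prod_mem_finset_pow [DecidableEq G] {S : Finset G} {l : List G}
    (hl : ∀ x ∈ l, x ∈ S) : l.prod ∈ S ^ l.length := by
  induction l with
  | nil => simp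
  | cons x t ih =>
    rw [List.prod_cons, List.length_cons, pow_succ']
    exact Finset.mul_mem_mul (hl x List.mem_cons_self)
      (ih fun y hy => hl y (List.mem_cons_of_mem _ hy))

theorem Subgroup.coe_closure_subset_pow [DecidableEq G] {S : Finset G}
    (hS : ∀ g, ∀ x ∈ S, g * x * g⁻¹ ∈ S) {d : ℕ} (hd : 0 < d) (hpow : ∀ x ∈ S, x ^ d = 1) :
    (closure (S : Set G) : Set G) ⊆ ↑(insert 1 S ^ ((d - 1) * #S)) := by
  intro x hx
  have hfin : ∀ x ∈ (S : Set G), IsOfFinOrder x :=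
    fun x hx => isOfFinOrder_iff_pow_eq_one.mpr ⟨d, hd, hpow x hx⟩
  rw [SetLike.mem_coe, ← mem_toSubmonoid, closure_toSubmonoid_of_isOfFinOrder hfin] at hx
  obtain ⟨l, hlS, rfl⟩ := Submonoid.exists_list_of_mem_closure hx
  obtain ⟨l', hl'S, hl'len, hl'prod⟩ := List.exists_length_le_prod_eq hS hd hpow l hlS
  rw [← hl'prod]
  exact pow_subset_pow_right (mem_insert_self 1 S) hl'len
    (List.prod_mem_finset_pow fun y hy => mem_insert_of_mem (hl'S y hy))

theorem Subgroup.finite_closure_and_card_le {S : Set G} (hSfin : S.Finite)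
    (hS : ∀ g, ∀ x ∈ S, g * x * g⁻¹ ∈ S) {d : ℕ} (hd : 0 < d) (hpow : ∀ x ∈ S, x ^ d = 1) :
    Finite (closure S) ∧ Nat.card (closure S) ≤ (S.ncard + 1) ^ ((d - 1) * S.ncard) := by
  classical
  lift S to Finset G using hSfin
  have hsub := coe_closure_subset_pow hS hd hpow
  refine ⟨(Finset.finite_toSet _).subset hsub, ?_⟩
  calc Nat.card (closure (S : Set G))
      ≤ #(insert 1 S ^ ((d - 1) * #S)) :=
        (Nat.card_mono (Finset.finite_toSet _) hsub).trans_eq (by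
          rw [Nat.card_coe_set_eq, Set.ncard_coe_finset])
    _ ≤ #(insert 1 S) ^ ((d - 1) * #S) := card_pow_le
    _ ≤ (#S + 1) ^ ((d - 1) * #S) := by gcongr; exact card_insert_le 1 S
    _ = _ := by rw [Set.ncard_coe_finset]

namespace Group

theorem ncard_conjugatesOfSet_le {s : Set G} (hs : s.Finite) {n : ℕ}
    (h : ∀ x ∈ s, Nat.card (conjugatesOf x) ≤ n) : (conjugatesOfSet s).ncard ≤ s.ncard * n := by
  lift s to Finset G using hs
  calc (conjugatesOfSet (s : Set G)).ncard ≤ ∑ x ∈ s, (conjugatesOf x).ncard := by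
        simpa [conjugatesOfSet] using s.set_ncard_biUnion_le conjugatesOf
    _ ≤ ∑ _x ∈ s, n := sum_le_sum fun x hx => (Nat.card_coe_set_eq _).symm.trans_le (h x hx)
    _ = (s : Set G).ncard * n := by simp

theorem pow_eq_one_of_mem_conjugatesOfSet {s : Set G} {d : ℕ} (h : ∀ a ∈ s, a ^ d = 1) {x : G}
    (hx : x ∈ conjugatesOfSet s) : x ^ d = 1 := by
  obtain ⟨a, ha, hax⟩ := mem_conjugatesOfSet_iff.mp hx
  have h1 := hax.pow d
  rw [h a ha] at h1
  exact isConj_one_right.mp h1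

end Group

/-- Dietzmann-type lemma: if every element of a subgroup `K` has `G`-conjugacy class
of size at most `n`, and `|K| ≤ j`, then the normal closure of `K` is finite of
`(n, j)`-bounded order. -/
theorem stmt_0 :
    ∃ f : ℕ → ℕ → ℕ, ∀ n j : ℕ, ∀ (G : Type) [Group G] (K : Subgroup G),
      (∀ x ∈ K, (conjugatesOf x).Finite ∧ Nat.card (conjugatesOf x) ≤ n) →
      Finite K → Nat.card K ≤ j →
      Finite (Subgroup.normalClosure (K : Set G)) ∧
        Nat.card (Subgroup.normalClosure (K : Set G)) ≤ f n j := by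
  refine ⟨fun n j => (j * n + 1) ^ ((j - 1) * (j * n)), fun n j G _ K hconj _ hKj => ?_⟩
  set S := Group.conjugatesOfSet (K : Set G)
  have hSfin : S.Finite := (Set.toFinite (K : Set G)).biUnion fun x hx => (hconj x hx).1
  have hScard : S.ncard ≤ j * n :=
    (Group.ncard_conjugatesOfSet_le (Set.toFinite _) fun x hx => (hconj x hx).2).trans
      (Nat.mul_le_mul_right n ((Nat.card_coe_set_eq _).symm.trans_le hKj))
  have hpow : ∀ x ∈ S, x ^ Nat.card K = 1 := fun x =>
    Group.pow_eq_one_of_mem_conjugatesOfSet fun a ha => congrArg Subtype.val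
      (pow_card_eq_one' (x := (⟨a, ha⟩ : K)))
  obtain ⟨hfin, hcard⟩ := Subgroup.finite_closure_and_card_le hSfin
    (fun _ _ hx => Group.conj_mem_conjugatesOfSet hx) Nat.card_pos hpow
  refine ⟨hfin, hcard.trans ?_⟩
  dsimp only
  gcongr
  omega
end

section
/- Let G be a finite group of odd order admitting a fixed-point-free automorphism of order 2. Then G is abelian. -/
/-- A finite group of odd order admitting a fixed-point-free automorphism of order 2
is abelian. -/
theorem stmt_6 (G : Type*) [Group G] [Finite G] (hodd : Odd (Nat.card G))
    (φ : MulAut G) (hord : orderOf φ = 2) (hfpf : ∀ x : G, φ x = x → x = 1) :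
    ∀ a b : G, a * b = b * a := by
  have hsq : ∀ x : G, φ (φ x) = x := by
    intro x
    have h : φ ^ 2 = 1 := by rw [← hord]; exact pow_orderOf_eq_one φ
    have := congrArg (fun ψ : MulAut G => ψ x) h
    simpa [pow_succ, MulAut.mul_apply] using this
  have hinj : Function.Injective (fun x : G => x⁻¹ * φ x) := by
    intro x y hxy
    simp only at hxy
    have key : φ y * (φ x)⁻¹ = y * x⁻¹ := by
      calc φ y * (φ x)⁻¹ = y * ((y⁻¹ * φ y) * (φ x)⁻¹) := by group
        _ = y * ((x⁻¹ * φ x) * (φ x)⁻¹) := by rw [hxy]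
        _ = y * x⁻¹ := by group
    have h1 : φ (y * x⁻¹) = y * x⁻¹ := by rw [map_mul, map_inv, key]
    have h2 := hfpf _ h1
    have h3 : y = x := by
      have := mul_eq_one_iff_eq_inv.mp h2
      simpa using this
    exact h3.symm
  have hsurj := Finite.surjective_of_injective hinj
  have hinv : ∀ g : G, φ g = g⁻¹ := by
    intro g
    obtain ⟨x, hx⟩ := hsurj g
    simp only at hx
    rw [← hx, map_mul, map_inv, hsq, mul_inv_rev, inv_inv]
  intro a b
  have h := hinv (a * b)
  rw [map_mul, hinv a, hinv b, mul_inv_rev] at h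
  have h' := congrArg (·⁻¹) h
  simpa [mul_inv_rev] using h'.symm
end

section
/- Let G be a residually finite, locally nilpotent group containing an element x whose centralizer C_G(x) is finite. Then G is finite. -/
/-!
Residual finiteness gives a normal subgroup `N` of finite index meeting the finite group
`C_G(x)` trivially. If `1 ≠ g ∈ N`, then `N ∩ ⟨g, x⟩` is a nontrivial normal subgroup of the
nilpotent group `⟨g, x⟩`, so it contains a nontrivial central element of `⟨g, x⟩`; this element
lies in `N ∩ C_G(x) = 1`, a contradiction. Hence `N = 1`, and `G` is finite.
-/

open Subgroup
open scoped commutatorElement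

section

variable {G : Type*} [Group G]

theorem Subgroup.inf_upperCentralSeries_succ_le_center {K : Subgroup G} [K.Normal] {n : ℕ}
    (hK : K ⊓ upperCentralSeries G n = ⊥) : K ⊓ upperCentralSeries G (n + 1) ≤ center G := by
  rintro z ⟨hzK, hz⟩
  rw [mem_center_iff]
  intro y
  have hcomm : ⁅z, y⁆ ∈ K ⊓ upperCentralSeries G n :=
    ⟨commutator_le_left K ⊤ (commutator_mem_commutator hzK (mem_top y)),
      mem_upperCentralSeries_succ_iff.mp hz y⟩
  rw [hK, mem_bot, commutatorElement_eq_one_iff_mul_comm] at hcomm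
  exact hcomm.symm

theorem Subgroup.Normal.inf_center_ne_bot [Group.IsNilpotent G] {K : Subgroup G} [K.Normal]
    (hK : K ≠ ⊥) : K ⊓ center G ≠ ⊥ := by
  suffices ∀ n, K ⊓ upperCentralSeries G n ≠ ⊥ → K ⊓ center G ≠ ⊥ by
    obtain ⟨n, hn⟩ := Group.IsNilpotent.nilpotent (G := G)
    exact this n (by rwa [hn, inf_top_eq])
  intro n
  induction n with
  | zero => simp
  | succ n ih =>
    intro hn
    by_cases hprev : K ⊓ upperCentralSeries G n = ⊥
    · exact ne_bot_of_le_ne_bot hn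
        (le_inf inf_le_left (inf_upperCentralSeries_succ_le_center hprev))
    · exact ih hprev

theorem Subgroup.Normal.inf_centralizer_ne_bot {N H : Subgroup G} [N.Normal]
    [Group.IsNilpotent H] (hNH : N ⊓ H ≠ ⊥) : N ⊓ centralizer (H : Set G) ≠ ⊥ := by
  have hN : N.subgroupOf H ≠ ⊥ := by
    rwa [Ne, subgroupOf_eq_bot, disjoint_iff]
  obtain ⟨z, ⟨hzN, hzc⟩, hz1⟩ :=
    (bot_or_exists_ne_one _).resolve_left (Normal.inf_center_ne_bot hN)
  have hz : (z : G) ∈ N ⊓ centralizer (H : Set G) :=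
    ⟨mem_subgroupOf.mp hzN, mem_centralizer_iff.mpr fun h hh =>
      congrArg Subtype.val (mem_center_iff.mp hzc ⟨h, hh⟩)⟩
  intro hbot
  rw [hbot, mem_bot] at hz
  exact hz1 (Subtype.ext hz)

theorem Subgroup.eq_bot_of_inf_centralizer_eq_bot
    (hln : ∀ s : Finset G, Group.IsNilpotent (closure (s : Set G)))
    {N : Subgroup G} [N.Normal] {x : G} (hN : N ⊓ centralizer {x} = ⊥) : N = ⊥ := by
  classical
  rw [eq_bot_iff_forall]
  intro g hg
  by_contra hg1
  set H := closure (({g, x} : Finset G) : Set G)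
  have hgH : g ∈ H := subset_closure (by simp)
  have hxH : x ∈ H := subset_closure (by simp)
  have hNH : N ⊓ H ≠ ⊥ := fun hbot => hg1 ((eq_bot_iff_forall _).mp hbot g ⟨hg, hgH⟩)
  refine ne_bot_of_le_ne_bot (Normal.inf_centralizer_ne_bot hNH) ?_ hN
  exact inf_le_inf_left N (centralizer_le (Set.singleton_subset_iff.mpr hxH))

theorem exists_normal_index_ne_zero_inf_eq_bot
    (hrf : ∀ g : G, g ≠ 1 → ∃ N : Subgroup G, N.Normal ∧ N.index ≠ 0 ∧ g ∉ N)
    (K : Subgroup G) [Finite K] : ∃ N : Subgroup G, N.Normal ∧ N.index ≠ 0 ∧ N ⊓ K = ⊥ := by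
  choose F hF_normal hF_index hF_not_mem using hrf
  let N := ⨅ k : {k : K // (k : G) ≠ 1}, F k k.2
  refine ⟨N, normal_iInf_normal fun k => hF_normal _ _, index_iInf_ne_zero fun k => hF_index _ _,
    ?_⟩
  rw [eq_bot_iff_forall]
  rintro g ⟨hgN, hgK⟩
  by_contra hg1
  exact hF_not_mem g hg1 (mem_iInf.mp hgN ⟨⟨g, hgK⟩, hg1⟩)

end

/-- A residually finite, locally nilpotent group containing an element with finite
centralizer is finite. -/
theorem stmt_12 (G : Type*) [Group G]
    (hrf : ∀ g : G, g ≠ 1 → ∃ N : Subgroup G, N.Normal ∧ N.index ≠ 0 ∧ g ∉ N)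
    (hln : ∀ s : Finset G, Group.IsNilpotent (Subgroup.closure (s : Set G)))
    (x : G) (hx : Finite (Subgroup.centralizer {x})) :
    Finite G := by
  obtain ⟨N, hN_normal, hN_index, hN⟩ :=
    exists_normal_index_ne_zero_inf_eq_bot hrf (centralizer {x})
  have hN_bot : N = ⊥ := eq_bot_of_inf_centralizer_eq_bot hln hN
  rw [hN_bot, index_bot] at hN_index
  exact Nat.finite_of_card_ne_zero hN_index
end

section
/- Let G be a locally nilpotent group, x ∈ G, and N a normal subgroup of G with N ∩ C_G(x) = 1. Then N = 1. -/
/-!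
If `N ⊓ C_G(x) = 1` and `y ∈ N`, the subgroup `H = ⟨x, y⟩` is nilpotent and `N ∩ H` is normal in
`H`. An element of `N ∩ Z(H)` commutes with `x`, so `N ∩ H` meets `Z(H)` trivially; climbing the
upper central series of `H` then shows `N ∩ H = 1`, whence `y = 1`.
-/

open Subgroup
open scoped commutatorElement

namespace Subgroup

variable {G : Type*} [Group G] {N : Subgroup G}

theorem Normal.inf_upperCentralSeries_eq_bot (hN : N.Normal) (h : N ⊓ center G = ⊥) (n : ℕ) :
    N ⊓ upperCentralSeries G n = ⊥ := by
  induction n with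
  | zero => simp
  | succ n ih =>
    refine eq_bot_iff.mpr fun z ⟨hzN, hz⟩ ↦ h ▸ ⟨hzN, mem_center_iff.mpr fun g ↦ ?_⟩
    have hcomm : ⁅z, g⁆ ∈ N ⊓ upperCentralSeries G n :=
      ⟨commutator_le_left N ⊤ (commutator_mem_commutator hzN (mem_top g)),
        mem_upperCentralSeries_succ_iff.mp hz g⟩
    rw [ih, mem_bot, commutatorElement_eq_one_iff_mul_comm] at hcomm
    exact hcomm.symm

theorem Normal.eq_bot_of_inf_center_eq_bot [Group.IsNilpotent G] (hN : N.Normal)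
    (h : N ⊓ center G = ⊥) : N = ⊥ := by
  obtain ⟨n, hn⟩ := Group.IsNilpotent.nilpotent (G := G)
  simpa [hn] using hN.inf_upperCentralSeries_eq_bot h n

theorem Normal.inf_eq_bot_of_inf_centralizer_eq_bot (hN : N.Normal) {H : Subgroup G}
    [Group.IsNilpotent H] {x : G} (hx : x ∈ H) (h : N ⊓ centralizer {x} = ⊥) : N ⊓ H = ⊥ := by
  have hcenter : N.subgroupOf H ⊓ center H = ⊥ := by
    refine eq_bot_iff.mpr fun z ⟨hzN, hz⟩ ↦ ?_
    have hzx : (z : G) ∈ N ⊓ centralizer {x} :=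
      ⟨hzN, mem_centralizer_singleton_iff.mpr
        (congrArg Subtype.val (mem_center_iff.mp hz ⟨x, hx⟩)).symm⟩
    rw [h, mem_bot] at hzx
    exact Subtype.ext hzx
  rw [← disjoint_iff, ← subgroupOf_eq_bot]
  exact (hN.subgroupOf H).eq_bot_of_inf_center_eq_bot hcenter

end Subgroup

/-- In a locally nilpotent group, a normal subgroup intersecting the centralizer of
some element trivially is itself trivial. -/
theorem stmt_13 (G : Type*) [Group G]
    (hln : ∀ s : Finset G, Group.IsNilpotent (Subgroup.closure (s : Set G)))
    (x : G) (N : Subgroup G) (hN : N.Normal)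
    (h : N ⊓ Subgroup.centralizer {x} = ⊥) :
    N = ⊥ := by
  classical
  refine eq_bot_iff.mpr fun y hy ↦ ?_
  let H := closure (({x, y} : Finset G) : Set G)
  have : Group.IsNilpotent H := hln {x, y}
  have hxH : x ∈ H := subset_closure (by simp)
  have hyH : y ∈ H := subset_closure (by simp)
  exact hN.inf_eq_bot_of_inf_centralizer_eq_bot hxH h ▸ mem_inf.mpr ⟨hy, hyH⟩
end

section
/- Let G be a profinite group and K a (closed) subgroup such that the conjugacy class x^G is finite for each x ∈ K. Then there exists an integer n such that |x^G| ≤ n for all x ∈ K. -/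
/-!
The sets `S n = {x ∈ K | |x^G| ≤ n}` are closed, since having `n + 1` distinct conjugates
`g_j x g_j⁻¹` is an open condition on `x`. They cover the compact group `K`, so by Baire one of
them, `S n`, has nonempty interior in `K`, and finitely many translates `g⁻¹ S n` cover `K`.
Since `(a b)^G ⊆ a^G b^G`, every `x = g⁻¹ (g x)` satisfies `|x^G| ≤ |g⁻¹^G| n`.
-/

open Set Function Pointwise

theorem Set.coe_lt_encard_range_iff {ι α : Type*} (φ : ι → α) (n : ℕ) :
    (n : ℕ∞) < (range φ).encard ↔ ∃ f : Fin (n + 1) → ι, Injective (φ ∘ f) := by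
  constructor
  · intro h
    obtain ⟨t, htφ, ht⟩ := exists_subset_encard_eq (Order.add_one_le_of_lt h)
    have : Finite t := (finite_of_encard_eq_coe ht).to_subtype
    have : Nat.card t = n + 1 := by simp [ncard_def, ht]
    obtain ⟨e⟩ := Finite.card_eq.mp (this.trans (Nat.card_fin (n + 1)).symm)
    choose f hf using fun j => htφ (e.symm j).2
    refine ⟨f, fun j k hjk => e.symm.injective (Subtype.ext ?_)⟩
    simpa only [comp_apply, hf] using hjk
  · rintro ⟨f, hf⟩
    calc (n : ℕ∞) < n + 1 := by exact_mod_cast n.lt_succ_self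
      _ = ENat.card (Fin (n + 1)) := by simp
      _ ≤ (range (φ ∘ f)).encard := hf.encard_range
      _ ≤ (range φ).encard := encard_le_encard (range_comp_subset_range f φ)

theorem isOpen_setOf_injective_apply {ι X Y : Type*} [Finite ι] [TopologicalSpace X]
    [TopologicalSpace Y] [T2Space Y] {Φ : ι → X → Y} (hΦ : ∀ i, Continuous (Φ i)) :
    IsOpen {x | Injective fun i => Φ i x} := by
  have : {x | Injective fun i => Φ i x} = ⋂ i, ⋂ j, {x | Φ i x = Φ j x → i = j} := by
    ext x; simp [Injective]
  rw [this]
  refine isOpen_iInter_of_finite fun i => isOpen_iInter_of_finite fun j => ?_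
  by_cases hij : i = j
  · simp [hij]
  · simpa [hij] using isOpen_ne_fun (hΦ i) (hΦ j)

section Conj

variable {G : Type*} [Group G]

theorem conjugatesOf_eq_range (x : G) : conjugatesOf x = range fun g : G => g * x * g⁻¹ := by
  ext y; exact isConj_iff

theorem conjugatesOf_mul_subset (a b : G) :
    conjugatesOf (a * b) ⊆ conjugatesOf a * conjugatesOf b := by
  simp only [conjugatesOf_eq_range]
  rintro _ ⟨g, rfl⟩
  exact ⟨_, ⟨g, rfl⟩, _, ⟨g, rfl⟩, by group⟩

theorem Nat.card_conjugatesOf_mul_le {a b : G} (ha : (conjugatesOf a).Finite)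
    (hb : (conjugatesOf b).Finite) :
    Nat.card (conjugatesOf (a * b)) ≤ Nat.card (conjugatesOf a) * Nat.card (conjugatesOf b) :=
  (Nat.card_mono (ha.mul hb) (conjugatesOf_mul_subset a b)).trans natCard_mul_le

theorem isClosed_setOf_encard_conjugatesOf_le [TopologicalSpace G] [ContinuousMul G] [T2Space G]
    (n : ℕ) : IsClosed {x : G | (conjugatesOf x).encard ≤ n} := by
  have : {x : G | (conjugatesOf x).encard ≤ n}ᶜ =
      ⋃ f : Fin (n + 1) → G, {x | Injective fun j => f j * x * (f j)⁻¹} := by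
    ext x
    simp only [mem_compl_iff, mem_ofPred_eq, not_le, conjugatesOf_eq_range,
      coe_lt_encard_range_iff, mem_iUnion]
    rfl
  rw [← isOpen_compl_iff, this]
  exact isOpen_iUnion fun f => isOpen_setOf_injective_apply fun j => by fun_prop

end Conj

theorem stmt_14_general (G : Type*) [Group G] [TopologicalSpace G] [IsTopologicalGroup G]
    [CompactSpace G] [T2Space G]
    (K : Subgroup G) (hK : IsClosed (K : Set G))
    (hfin : ∀ x ∈ K, (conjugatesOf x).Finite) :
    ∃ n : ℕ, ∀ x ∈ K, Nat.card (conjugatesOf x) ≤ n := by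
  have : CompactSpace K := isCompact_iff_compactSpace.mp hK.isCompact
  let S : ℕ → Set K := fun n => {x | (conjugatesOf (x : G)).encard ≤ n}
  have hS : ∀ n, IsClosed (S n) := fun n =>
    (isClosed_setOf_encard_conjugatesOf_le n).preimage continuous_subtype_val
  have hcover : ⋃ n, S n = univ := eq_univ_of_forall fun x =>
    mem_iUnion.2 ⟨_, (hfin x x.2).encard_eq_coe.le⟩
  obtain ⟨n, hn⟩ := nonempty_interior_of_iUnion_of_closed hS hcover
  obtain ⟨t, ht⟩ := compact_covered_by_mul_left_translates isCompact_univ hn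
  refine ⟨t.sup (fun g => Nat.card (conjugatesOf (g⁻¹ : G))) * n, fun x hx => ?_⟩
  obtain ⟨g, hg, hgx⟩ := mem_iUnion₂.1 (ht (mem_univ ⟨x, hx⟩))
  have hgx_le : Nat.card (conjugatesOf (g * x : G)) ≤ n :=
    (encard_le_coe_iff_finite_ncard_le.1 hgx).2
  calc Nat.card (conjugatesOf x)
      ≤ Nat.card (conjugatesOf (g⁻¹ : G)) * Nat.card (conjugatesOf (g * x : G)) := by
        simpa using
          Nat.card_conjugatesOf_mul_le (hfin _ (K.inv_mem g.2)) (hfin _ (K.mul_mem g.2 hx))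
    _ ≤ _ := Nat.mul_le_mul
        (Finset.le_sup (f := fun g : K => Nat.card (conjugatesOf (g⁻¹ : G))) hg) hgx_le

/-- In a profinite group, if every element of a closed subgroup `K` has finite
conjugacy class, then the sizes of these classes are uniformly bounded. -/
theorem stmt_14 (G : Type*) [Group G] [TopologicalSpace G] [IsTopologicalGroup G]
    [CompactSpace G] [T2Space G] [TotallyDisconnectedSpace G]
    (K : Subgroup G) (hK : IsClosed (K : Set G))
    (hfin : ∀ x ∈ K, (conjugatesOf x).Finite) :
    ∃ n : ℕ, ∀ x ∈ K, Nat.card (conjugatesOf x) ≤ n :=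
  stmt_14_general G K hK hfin
end

section
/- Let G be a group, K a subgroup with |x^G| ≤ n for each x ∈ K, H = ⟨K^G⟩, X = ⋃_{g∈G} K^g, m the maximum of [H : C_H(x)] over x ∈ K, and a ∈ K attaining this maximum, with b_1, …, b_m ∈ H satisfying a^H = {a^{b_i}}. Set U = C_G(⟨b_1, …, b_m⟩). If u ∈ U and ua ∈ X, then [H, u] ≤ [H, a]. -/
open scoped commutatorElement

/-!
Since `u` commutes with the `b_i`, left multiplication by `u` maps `a^H = {a^{b_i}}` into
`(ua)^H`. As `ua` is a `G`-conjugate of some `k ∈ K` and `H` is normal, `|(ua)^H| = |k^H| ≤ m = |a^H|`,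
so `u · a^H = (ua)^H`. Hence for `h ∈ H` both `(ua)^{h⁻¹} = u y` and `a^{h⁻¹} = z` with
`y, z ∈ a^H`, giving `[u⁻¹, h] = y z⁻¹ = (y a⁻¹)(z a⁻¹)⁻¹ ∈ [H, a]`; conjugating by `u`
turns this into `[h, u] ∈ [H, a]`.
-/

namespace Subgroup

variable {G : Type*} [Group G]

/-- The `H`-conjugacy class `x^H`, with the right-conjugation convention `x^h = h⁻¹ x h`. -/
def conjClassIn (H : Subgroup G) (x : G) : Set G := {y | ∃ h ∈ H, y = h⁻¹ * x * h}

/-- `[H, x]`. -/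
def commutatorWith (H : Subgroup G) (x : G) : Subgroup G := closure {z | ∃ h ∈ H, z = ⁅h, x⁆}

theorem nat_card_conjClassIn (H : Subgroup G) (x : G) :
    Nat.card (H.conjClassIn x) = (centralizer {x}).relIndex H := by
  let _ : MulAction H G :=
    MulAction.compHom G ((ConjAct.toConjAct : G ≃* ConjAct G).toMonoidHom.comp H.subtype)
  have hstab : MulAction.stabilizer H x = (centralizer {x}).subgroupOf H := by
    ext h
    rw [MulAction.mem_stabilizer_iff, mem_subgroupOf, mem_centralizer_singleton_iff,
      ← mul_inv_eq_iff_eq_mul]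
    rfl
  have horbit : MulAction.orbit H x = H.conjClassIn x := by
    ext y
    constructor
    · rintro ⟨h, rfl⟩
      exact ⟨(h : G)⁻¹, inv_mem h.2, by rw [inv_inv]; rfl⟩
    · rintro ⟨h, hh, rfl⟩
      exact ⟨⟨h⁻¹, inv_mem hh⟩, show h⁻¹ * x * h⁻¹⁻¹ = _ by rw [inv_inv]⟩
  rw [relIndex, ← hstab, MulAction.index_stabilizer, horbit, Nat.card_coe_set_eq]

theorem conjClassIn_conj {H : Subgroup G} [H.Normal] (g x : G) :
    H.conjClassIn (g⁻¹ * x * g) = (fun y => g⁻¹ * y * g) '' H.conjClassIn x := by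
  ext y
  constructor
  · rintro ⟨h, hh, rfl⟩
    exact ⟨(g * h * g⁻¹)⁻¹ * x * (g * h * g⁻¹), ⟨_, Normal.conj_mem ‹_› h hh g, rfl⟩, by group⟩
  · rintro ⟨_, ⟨h, hh, rfl⟩, rfl⟩
    refine ⟨g⁻¹ * h * g, ?_, by group⟩
    simpa using Normal.conj_mem ‹_› h hh g⁻¹

theorem nat_card_conjClassIn_conj {H : Subgroup G} [H.Normal] (g x : G) :
    Nat.card (H.conjClassIn (g⁻¹ * x * g)) = Nat.card (H.conjClassIn x) := by
  rw [conjClassIn_conj]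
  exact Nat.card_image_of_injective (fun y z hyz => by simpa using hyz) _

theorem mul_inv_mem_commutatorWith {H : Subgroup G} {x y : G} (hy : y ∈ H.conjClassIn x) :
    y * x⁻¹ ∈ H.commutatorWith x := by
  obtain ⟨h, hh, rfl⟩ := hy
  exact subset_closure ⟨h⁻¹, inv_mem hh, by group⟩

theorem image_mul_conjClassIn_eq {ι : Type*} {H : Subgroup G} {x u : G} {b : ι → G}
    (hb : ∀ i, b i ∈ H) (hbx : H.conjClassIn x = Set.range (fun i => (b i)⁻¹ * x * b i))
    (hu : u ∈ centralizer (Set.range b)) (hfin : (H.conjClassIn (u * x)).Finite)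
    (hcard : Nat.card (H.conjClassIn (u * x)) ≤ Nat.card (H.conjClassIn x)) :
    (u * ·) '' H.conjClassIn x = H.conjClassIn (u * x) := by
  refine Set.eq_of_subset_of_ncard_le ?_ ?_ hfin
  · rintro _ ⟨_, hy, rfl⟩
    obtain ⟨i, rfl⟩ := hbx ▸ hy
    have hcomm : b i * u = u * b i := mem_centralizer_iff.mp hu (b i) ⟨i, rfl⟩
    refine ⟨b i, hb i, ?_⟩
    calc u * ((b i)⁻¹ * x * b i) = (b i)⁻¹ * (b i * u) * (b i)⁻¹ * x * b i := by group
      _ = (b i)⁻¹ * (u * x) * b i := by rw [hcomm]; group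
  · rw [Set.ncard_image_of_injective _ (mul_right_injective u), ← Nat.card_coe_set_eq,
      ← Nat.card_coe_set_eq]
    exact hcard

theorem commutatorWith_le_of_image_mul_conjClassIn_eq {H : Subgroup G} [H.Normal] {x u : G}
    (hux : (u * ·) '' H.conjClassIn x = H.conjClassIn (u * x)) :
    H.commutatorWith u ≤ H.commutatorWith x := by
  have hinv : ∀ h ∈ H, ⁅u⁻¹, h⁆ ∈ H.commutatorWith x := by
    intro h hh
    obtain ⟨y, hy, hy_eq⟩ : h * (u * x) * h⁻¹ ∈ (u * ·) '' H.conjClassIn x :=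
      hux ▸ ⟨h⁻¹, inv_mem hh, by group⟩
    have hz : h * x * h⁻¹ ∈ H.conjClassIn x := ⟨h⁻¹, inv_mem hh, by group⟩
    have : ⁅u⁻¹, h⁆ = (y * x⁻¹) * (h * x * h⁻¹ * x⁻¹)⁻¹ := by
      rw [commutatorElement_def, show y = u⁻¹ * (h * (u * x) * h⁻¹) by rw [← hy_eq]; group]
      group
    rw [this]
    exact mul_mem (mul_inv_mem_commutatorWith hy) (inv_mem (mul_inv_mem_commutatorWith hz))
  refine closure_le _ |>.mpr ?_
  rintro _ ⟨h, hh, rfl⟩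
  -- `⁅h, u⁆ = ⁅u⁻¹, u h u⁻¹⁆`
  simpa [commutatorElement_def, mul_assoc] using hinv _ (Normal.conj_mem ‹_› h hh u)

end Subgroup

theorem stmt_17_general (G : Type*) [Group G] (K : Subgroup G)
    (H : Subgroup G) (hH : H = Subgroup.normalClosure (K : Set G))
    (X : Set G) (hX : X = {x | ∃ g : G, ∃ k ∈ K, x = g⁻¹ * k * g})
    (m : ℕ)
    (hm : ∀ x ∈ K, 0 < (Subgroup.centralizer {x}).relIndex H ∧
      (Subgroup.centralizer {x}).relIndex H ≤ m)
    (a : G) (hamax : (Subgroup.centralizer {a}).relIndex H = m)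
    (b : Fin m → G) (hb : ∀ i, b i ∈ H)
    (hbconj : {x | ∃ h ∈ H, x = h⁻¹ * a * h} =
      Set.range (fun i => (b i)⁻¹ * a * (b i)))
    (U : Subgroup G) (hU : U = Subgroup.centralizer (Set.range b))
    (u : G) (hu : u ∈ U) (hua : u * a ∈ X) :
    Subgroup.closure {z | ∃ h ∈ H, z = ⁅h, u⁆} ≤
      Subgroup.closure {z | ∃ h ∈ H, z = ⁅h, a⁆} := by
  have : H.Normal := hH ▸ Subgroup.normalClosure_normal
  obtain ⟨g, k, hk, hgk⟩ := hX ▸ hua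
  have hcard : Nat.card (H.conjClassIn (u * a)) = (Subgroup.centralizer {k}).relIndex H := by
    rw [hgk, Subgroup.nat_card_conjClassIn_conj, Subgroup.nat_card_conjClassIn]
  have hfin : (H.conjClassIn (u * a)).Finite :=
    Set.finite_of_ncard_pos (Nat.card_coe_set_eq _ ▸ hcard ▸ (hm k hk).1)
  have hle : Nat.card (H.conjClassIn (u * a)) ≤ Nat.card (H.conjClassIn a) := by
    rw [hcard, Subgroup.nat_card_conjClassIn, hamax]
    exact (hm k hk).2
  exact Subgroup.commutatorWith_le_of_image_mul_conjClassIn_eq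
    (Subgroup.image_mul_conjClassIn_eq hb hbconj (hU ▸ hu) hfin hle)

/-- Lemma 2.4: under Hypothesis 2.3, with `a ∈ K` of maximal `H`-class size `m`,
`b_1, …, b_m ∈ H` with `a^H = {a^{b_i}}`, and `U = C_G(⟨b_1, …, b_m⟩)`:
if `u ∈ U` and `ua ∈ X`, then `[H, u] ≤ [H, a]`. -/
theorem stmt_17 (n : ℕ) (G : Type*) [Group G] (K : Subgroup G)
    (hclass : ∀ x ∈ K, (conjugatesOf x).Finite ∧ Nat.card (conjugatesOf x) ≤ n)
    (H : Subgroup G) (hH : H = Subgroup.normalClosure (K : Set G))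
    (X : Set G) (hX : X = {x | ∃ g : G, ∃ k ∈ K, x = g⁻¹ * k * g})
    (m : ℕ)
    (hm : ∀ x ∈ K, 0 < (Subgroup.centralizer {x}).relIndex H ∧
      (Subgroup.centralizer {x}).relIndex H ≤ m)
    (a : G) (ha : a ∈ K) (hamax : (Subgroup.centralizer {a}).relIndex H = m)
    (b : Fin m → G) (hb : ∀ i, b i ∈ H)
    (hbconj : {x | ∃ h ∈ H, x = h⁻¹ * a * h} =
      Set.range (fun i => (b i)⁻¹ * a * (b i)))
    (U : Subgroup G) (hU : U = Subgroup.centralizer (Set.range b))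
    (u : G) (hu : u ∈ U) (hua : u * a ∈ X) :
    Subgroup.closure {z | ∃ h ∈ H, z = ⁅h, u⁆} ≤
      Subgroup.closure {z | ∃ h ∈ H, z = ⁅h, a⁆} :=
  stmt_17_general G K H hH X hX m hm a hamax b hb hbconj U hU u hu hua
end

section
/- Let G be a group and H a normal subgroup such that H/Z(H) is finite of order k. Then the derived subgroup H' is finite, of order bounded in terms of k. -/
/-!
A commutator `⁅a, b⁆` only depends on the cosets of `a` and `b` modulo the center, so a group
whose center has index `k` has at most `k ^ 2` commutators. By Schur's theorem in the form
`|G'| ∣ k ^ (k * n + 1)`, where `n` is the number of commutators (which comes from the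
transfer into the center and Schreier's bound on ranks of subgroups), this gives
`|G'| ≤ k ^ (k ^ 3 + 1)`. The commutator subgroup `⁅H, H⁆` of a subgroup `H ≤ G` is the image
of the commutator subgroup of `H` itself under the inclusion.
-/

open Subgroup
open scoped commutatorElement

variable {G : Type*} [Group G]

theorem commutatorElement_mul_center (a b : G) {z w : G} (hz : z ∈ center G)
    (hw : w ∈ center G) : ⁅a * z, b * w⁆ = ⁅a, b⁆ := by
  rw [mem_center_iff] at hz hw
  simp only [commutatorElement_def, mul_inv_rev]
  calc a * z * (b * w) * (z⁻¹ * a⁻¹) * (w⁻¹ * b⁻¹)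
      = a * (z * (b * w) * z⁻¹) * (a⁻¹ * w⁻¹) * b⁻¹ := by group
    _ = a * b * (w * a⁻¹ * w⁻¹) * b⁻¹ := by rw [← hz (b * w)]; group
    _ = a * b * a⁻¹ * b⁻¹ := by rw [← hw a⁻¹]; group

theorem commutatorElement_out_out (a b : G) :
    ⁅(a : G ⧸ center G).out, (b : G ⧸ center G).out⁆ = ⁅a, b⁆ := by
  obtain ⟨z, hz⟩ := QuotientGroup.mk_out_eq_mul (center G) a
  obtain ⟨w, hw⟩ := QuotientGroup.mk_out_eq_mul (center G) b
  rw [hz, hw, commutatorElement_mul_center a b z.2 w.2]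

theorem commutatorSet_eq_range_out : commutatorSet G =
    Set.range fun p : (G ⧸ center G) × (G ⧸ center G) ↦ ⁅p.1.out, p.2.out⁆ := by
  ext g
  constructor
  · rintro ⟨a, b, rfl⟩
    exact ⟨(a, b), commutatorElement_out_out a b⟩
  · rintro ⟨p, rfl⟩
    exact commutator_mem_commutatorSet _ _

theorem Subgroup.card_commutator_eq (H : Subgroup G) :
    Nat.card (⁅H, H⁆ : Subgroup G) = Nat.card (_root_.commutator H) := by
  rw [← H.map_subtype_commutator, card_map_of_injective H.subtype_injective]

variable [(center G).FiniteIndex]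

instance finite_commutatorSet_of_finiteIndex_center : Finite (commutatorSet G) := by
  rw [commutatorSet_eq_range_out]
  exact Set.finite_range _

theorem card_commutatorSet_le_index_center_sq :
    Nat.card (commutatorSet G) ≤ (center G).index ^ 2 := by
  rw [commutatorSet_eq_range_out, index_eq_card, sq, ← Nat.card_prod]
  exact Finite.card_range_le _

theorem card_commutator_le_index_center_pow :
    Nat.card (_root_.commutator G) ≤ (center G).index ^ ((center G).index ^ 3 + 1) := by
  have hk : 0 < (center G).index := Nat.pos_of_ne_zero FiniteIndex.index_ne_zero
  calc Nat.card (_root_.commutator G)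
      ≤ (center G).index ^ ((center G).index * Nat.card (commutatorSet G) + 1) :=
        Nat.le_of_dvd (Nat.pow_pos hk) (card_commutator_dvd_index_center_pow G)
    _ ≤ (center G).index ^ ((center G).index ^ 3 + 1) := by
        refine Nat.pow_le_pow_right hk ?_
        gcongr
        calc (center G).index * Nat.card (commutatorSet G)
            ≤ (center G).index * (center G).index ^ 2 :=
              Nat.mul_le_mul_left _ card_commutatorSet_le_index_center_sq
          _ = (center G).index ^ 3 := by ring

/-- Schur's theorem: if `H` is a normal subgroup of `G` with `H/Z(H)` finite of
order `k`, then the derived subgroup `H'` is finite of `k`-bounded order. -/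
theorem stmt_18 :
    ∃ f : ℕ → ℕ, ∀ k : ℕ, ∀ (G : Type) [Group G] (H : Subgroup G), H.Normal →
      Finite (H ⧸ Subgroup.center H) → Nat.card (H ⧸ Subgroup.center H) = k →
        Finite (⁅H, H⁆ : Subgroup G) ∧ Nat.card (⁅H, H⁆ : Subgroup G) ≤ f k := by
  refine ⟨fun k ↦ k ^ (k ^ 3 + 1), fun k G _ H _ _ hk ↦ ?_⟩
  have : (center H).FiniteIndex := finiteIndex_of_finite_quotient
  have hcard : Nat.card (⁅H, H⁆ : Subgroup G) ≤ k ^ (k ^ 3 + 1) := by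
    rw [H.card_commutator_eq, ← hk, ← index_eq_card]
    exact card_commutator_le_index_center_pow
  refine ⟨Nat.finite_of_card_ne_zero ?_, hcard⟩
  rw [H.card_commutator_eq]
  exact Nat.card_pos.ne'
end
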